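/- Exponential tilt implied by the logistic model (Section 3.2). Let U : Ω → ℝ be a random variable and G : ℝ → ℝ a measurable function such that E[D | σ(U)] = expit(logit ρ + G(U)) almost surely. Let μ₀ and μ₁ denote the conditional laws of U given D = 0 and D = 1 respectively (μ_d(A) = P({U ∈ A} ∩ {D = d})/P(D = d)). Then μ₁ is absolutely continuous with respect to μ₀ with Radon–Nikodym density exp∘G: for every Borel set A ⊆ ℝ, P(U ∈ A | D = 1) = ∫_A exp(G(u)) dμ₀(u). In particular ∫ exp(G(u)) dμ₀(u) = 1. -/

import Mathlib

open MeasureTheory Real Set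

/-! The model says, via the defining property of conditional expectation, that the laws of `U`
on `D` and on `Dᶜ` have densities `p = expit (logit ρ + G)` and `1 - p` with respect to the law
of `U`. Since `expit y = exp y * (1 - expit y)`, we get `p = ρ / (1 - ρ) * exp G * (1 - p)`, and
normalising by `μ D = ρ` and `μ Dᶜ = 1 - ρ` (Bayes' rule) leaves `dμ₁ = exp G dμ₀`. -/

/-- The expit (inverse logit) function. -/
noncomputable def expit (x : ℝ) : ℝ := Real.exp x / (1 + Real.exp x)

/-- The logit function. -/
noncomputable def logit (p : ℝ) : ℝ := Real.log (p / (1 - p))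

lemma expit_nonneg (x : ℝ) : 0 ≤ expit x := by unfold expit; positivity

lemma expit_le_one (x : ℝ) : expit x ≤ 1 := by
  rw [expit, div_le_one (by positivity)]; linarith

lemma measurable_expit : Measurable expit := by unfold expit; fun_prop

lemma expit_eq_exp_mul_one_sub_expit (x : ℝ) : expit x = exp x * (1 - expit x) := by
  have : 1 + exp x ≠ 0 := by positivity
  rw [expit]; field_simp; ring

lemma exp_logit {p : ℝ} (h0 : 0 < p) (h1 : p < 1) : exp (logit p) = p / (1 - p) :=
  exp_log (div_pos h0 (sub_pos.2 h1))

lemma ofReal_expit_logit_add {p : ℝ} (h0 : 0 < p) (h1 : p < 1) (x : ℝ) :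
    ENNReal.ofReal (expit (logit p + x)) = ENNReal.ofReal p / ENNReal.ofReal (1 - p) *
      (ENNReal.ofReal (1 - expit (logit p + x)) * ENNReal.ofReal (exp x)) := by
  have hodds : expit (logit p + x) = p / (1 - p) * ((1 - expit (logit p + x)) * exp x) := by
    conv_lhs => rw [expit_eq_exp_mul_one_sub_expit, exp_add, exp_logit h0 h1]
    ring
  rw [← ENNReal.ofReal_div_of_pos (sub_pos.2 h1),
    ← ENNReal.ofReal_mul (sub_nonneg.2 (expit_le_one _)),
    ← ENNReal.ofReal_mul (div_nonneg h0.le (sub_pos.2 h1).le), ← hodds]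

theorem condExp_indicator_compl_ae_eq {Ω : Type*} {m m₀ : MeasurableSpace Ω}
    {μ : Measure[m₀] Ω} [IsFiniteMeasure μ] (hm : m ≤ m₀) {D : Set Ω}
    (hD : MeasurableSet[m₀] D) {g : Ω → ℝ}
    (hcond : μ[D.indicator (fun _ => (1 : ℝ)) | m] =ᵐ[μ] g) :
    μ[Dᶜ.indicator (fun _ => (1 : ℝ)) | m] =ᵐ[μ] 1 - g := by
  rw [indicator_compl]
  filter_upwards [condExp_sub (μ := μ) (integrable_const (1 : ℝ))
    ((integrable_const 1).indicator hD) m, hcond] with ω hsub hω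
  simp [hsub, condExp_const hm, hω]

section
variable {Ω β : Type*} [MeasurableSpace Ω] [MeasurableSpace β] {μ : Measure Ω} {D : Set Ω}
  {U : Ω → β}

theorem map_restrict_eq_withDensity_of_condExp_indicator_ae_eq [IsFiniteMeasure μ]
    (hD : MeasurableSet D) (hU : Measurable U) {f : β → ℝ} (hf : Measurable f) (hf0 : 0 ≤ f)
    (hcond : μ[D.indicator (fun _ => (1 : ℝ)) | MeasurableSpace.comap U ‹_›]
      =ᵐ[μ] fun ω => f (U ω)) :
    (μ.restrict D).map U = (μ.map U).withDensity fun b => ENNReal.ofReal (f b) := by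
  have hfU : Integrable (fun ω => f (U ω)) μ := integrable_condExp.congr hcond
  have hf_int : Integrable f (μ.map U) :=
    (integrable_map_measure hf.aestronglyMeasurable hU.aemeasurable).2 hfU
  ext A hA
  have hAU : MeasurableSet[MeasurableSpace.comap U ‹_›] (U ⁻¹' A) := ⟨A, hA, rfl⟩
  have hsetIntegral : ∫ b in A, f b ∂μ.map U = μ.real (U ⁻¹' A ∩ D) :=
    calc ∫ b in A, f b ∂μ.map U = ∫ ω in U ⁻¹' A, f (U ω) ∂μ :=
          setIntegral_map hA hf.aestronglyMeasurable hU.aemeasurable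
      _ = ∫ ω in U ⁻¹' A, (μ[D.indicator (fun _ => (1 : ℝ)) | _]) ω ∂μ :=
          setIntegral_congr_ae (hU hA) (hcond.mono fun ω h _ => h.symm)
      _ = ∫ ω in U ⁻¹' A, D.indicator (fun _ => (1 : ℝ)) ω ∂μ :=
          setIntegral_condExp hU.comap_le ((integrable_const 1).indicator hD) hAU
      _ = μ.real (U ⁻¹' A ∩ D) := by
          rw [setIntegral_indicator hD, setIntegral_const, smul_eq_mul, mul_one]
  rw [withDensity_apply _ hA, ← ofReal_integral_eq_lintegral_ofReal hf_int.integrableOn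
    (ae_of_all _ hf0), hsetIntegral, ofReal_measureReal, Measure.map_apply hU hA,
    Measure.restrict_apply (hU hA)]

lemma inv_smul_withDensity_eq_withDensity {ν : Measure β} {q₀ q₁ e : β → ENNReal}
    {a b : ENNReal} (ha0 : a ≠ 0) (ha : a ≠ ⊤) (hq₀ : Measurable q₀) (he : Measurable e)
    (h : ∀ u, q₁ u = a / b * (q₀ u * e u)) :
    a⁻¹ • ν.withDensity q₁ = (b⁻¹ • ν.withDensity q₀).withDensity e := by
  have hq₁ : q₁ = (a / b) • (q₀ * e) := funext h
  rw [hq₁, withDensity_smul _ (hq₀.mul he), withDensity_mul _ hq₀ he, smul_smul,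
    withDensity_smul_measure, div_eq_mul_inv, ← mul_assoc, ENNReal.inv_mul_cancel ha0 ha, one_mul]

lemma toReal_withDensity_ofReal_apply {ν : Measure β} {h : β → ℝ} (h0 : 0 ≤ h)
    (hm : AEStronglyMeasurable h ν) {A : Set β} (hA : MeasurableSet A) :
    (ν.withDensity (fun x => ENNReal.ofReal (h x)) A).toReal = ∫ x in A, h x ∂ν := by
  rw [withDensity_apply _ hA, integral_eq_lintegral_of_nonneg_ae (ae_of_all _ h0) hm.restrict]

end

/-- The logistic regression model `E[D | σ(U)] = expit(logit ρ + G(U))` implies an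
exponential tilt relationship between the conditional law `μ₁` of `U` among cases and the
conditional law `μ₀` of `U` among controls: `μ₁ ≪ μ₀` with density `exp ∘ G`, i.e.
`P(U ∈ A | D = 1) = ∫_A exp(G u) dμ₀(u)` for every Borel `A`; in particular
`∫ exp(G u) dμ₀(u) = 1`. -/
theorem exponential_tilt_of_logistic_model
    {Ω : Type*} [MeasurableSpace Ω] (μ : Measure Ω) [IsProbabilityMeasure μ]
    (D : Set Ω) (hD : MeasurableSet D)
    (hρ0 : 0 < (μ D).toReal) (hρ1 : (μ D).toReal < 1)
    (U : Ω → ℝ) (hU : Measurable U)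
    (G : ℝ → ℝ) (hG : Measurable G)
    (hmodel : μ[D.indicator (fun _ => (1:ℝ)) | MeasurableSpace.comap U Real.measurableSpace]
      =ᵐ[μ] fun ω => expit (logit (μ D).toReal + G (U ω)))
    (μ₀ μ₁ : Measure ℝ)
    (hμ₀ : μ₀ = Measure.map U ((μ Dᶜ)⁻¹ • μ.restrict Dᶜ))
    (hμ₁ : μ₁ = Measure.map U ((μ D)⁻¹ • μ.restrict D)) :
    μ₁ ≪ μ₀
      ∧ (∀ A : Set ℝ, MeasurableSet A →
          (μ₁ A).toReal = ∫ u in A, Real.exp (G u) ∂μ₀)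
      ∧ (∫ u, Real.exp (G u) ∂μ₀) = 1 := by
  set ρ := (μ D).toReal
  set p : ℝ → ℝ := fun u => expit (logit ρ + G u)
  have hp : Measurable p := measurable_expit.comp (measurable_const.add hG)
  have hcases := map_restrict_eq_withDensity_of_condExp_indicator_ae_eq hD hU hp
    (fun _ => expit_nonneg _) hmodel
  have hcontrols := map_restrict_eq_withDensity_of_condExp_indicator_ae_eq hD.compl hU
    (measurable_const.sub hp) (fun _ => sub_nonneg.2 (expit_le_one _))
    (condExp_indicator_compl_ae_eq hU.comap_le hD hmodel)
  have hμD : μ D ≠ 0 := (ENNReal.toReal_pos_iff.1 hρ0).1.ne'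
  have hodds : ENNReal.ofReal ρ / ENNReal.ofReal (1 - ρ) = μ D / μ Dᶜ := by
    rw [ENNReal.ofReal_sub _ hρ0.le, ENNReal.ofReal_one,
      ENNReal.ofReal_toReal (measure_ne_top _ _), prob_compl_eq_one_sub hD]
  have htilt : μ₁ = μ₀.withDensity fun u => ENNReal.ofReal (exp (G u)) := by
    rw [hμ₁, hμ₀, Measure.map_smul, Measure.map_smul, hcases, hcontrols]
    refine inv_smul_withDensity_eq_withDensity hμD (measure_ne_top _ _) (by fun_prop)
      (by fun_prop) fun u => ?_
    rw [← hodds]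
    exact ofReal_expit_logit_add hρ0 hρ1 (G u)
  have hμ₁_univ : μ₁ univ = 1 := by
    rw [hμ₁, Measure.map_apply hU .univ, preimage_univ, Measure.smul_apply,
      Measure.restrict_apply_univ, smul_eq_mul, ENNReal.inv_mul_cancel hμD
        (measure_ne_top _ _)]
  have hdensity : ∀ A, MeasurableSet A → (μ₁ A).toReal = ∫ u in A, exp (G u) ∂μ₀ :=
    fun A hA => htilt ▸
      toReal_withDensity_ofReal_apply (fun _ => (exp_pos _).le) (by fun_prop) hA
  refine ⟨htilt ▸ withDensity_absolutelyContinuous _ _, hdensity, ?_⟩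
  simpa [hμ₁_univ] using (hdensity univ .univ).symm
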